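/- For any cubic graph G (3-regular), the independent domination number satisfies 2·i(G) ≤ 3·γ(G). -/

import Mathlib

open Finset

/-- `D` is a dominating set of `G`: every vertex outside `D` has a neighbor in `D`. -/
def IsDomSet {V : Type*} (G : SimpleGraph V) (D : Finset V) : Prop :=
  ∀ v ∉ D, ∃ u ∈ D, G.Adj u v

/-- `D` is an independent set of `G`. -/
def IsIndepSet {V : Type*} (G : SimpleGraph V) (D : Finset V) : Prop :=
  ∀ u ∈ D, ∀ v ∈ D, ¬ G.Adj u v

/-- The domination number. -/
noncomputable def domNum {V : Type*} [Fintype V] (G : SimpleGraph V) : ℕ :=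
  sInf {n | ∃ D : Finset V, IsDomSet G D ∧ D.card = n}

/-- The independent domination number. -/
noncomputable def indDomNum {V : Type*} [Fintype V] (G : SimpleGraph V) : ℕ :=
  sInf {n | ∃ D : Finset V, IsDomSet G D ∧ IsIndepSet G D ∧ D.card = n}

/-!
Let `D` be a minimum dominating set, `M` a maximum independent subset of `D`, and `I` an
independent set of maximum size containing `M`; `I` is dominating. Put `B = D \ M` and
`J = I \ M`. Every vertex of `B` has a neighbour in `M`, so at most two in `J ∪ B`; every vertex
of `J` lies outside `D` and has a neighbour in `B`. Writing `e` for the sum of the `B`-degrees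
over `B`, this gives `|J| ≤ 2|B| - e`, while the vertices of `B` without a neighbour in `B` form
an independent subset of `D`, so `|B| ≤ |M| + e`. Hence `|J| ≤ 2|B|` and `|J| ≤ |B| + |M|`,
and adding, `2|I| = 2|J| + 2|M| ≤ 3|B| + 3|M| = 3|D|`.
-/

section

variable {V : Type*} {G : SimpleGraph V}

theorem IsIndepSet.notMem_of_adj {I : Finset V} (hI : IsIndepSet G I) {u v : V} (hu : u ∈ I)
    (huv : G.Adj u v) : v ∉ I :=
  fun hv => hI u hu v hv huv

theorem IsIndepSet.insert [DecidableEq V] {s : Finset V} {v : V} (hs : IsIndepSet G s)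
    (hv : ∀ u ∈ s, ¬ G.Adj v u) : IsIndepSet G (insert v s) := by
  intro a ha b hb hab
  rw [mem_insert] at ha hb
  rcases ha with rfl | ha <;> rcases hb with rfl | hb
  · exact G.loopless.irrefl _ hab
  · exact hv b hb hab
  · exact hv a ha hab.symm
  · exact hs a ha b hb hab

variable (G) in
def IsMaxIndepSetBetween (M D I : Finset V) : Prop :=
  M ⊆ I ∧ I ⊆ D ∧ IsIndepSet G I ∧ ∀ s, M ⊆ s → s ⊆ D → IsIndepSet G s → #s ≤ #I

variable (G) in
theorem exists_isMaxIndepSetBetween {M D : Finset V} (hMD : M ⊆ D) (hM : IsIndepSet G M) :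
    ∃ I, IsMaxIndepSetBetween G M D I := by
  classical
  obtain ⟨I, hI, hmax⟩ := exists_max_image (D.powerset.filter fun s => M ⊆ s ∧ IsIndepSet G s)
    card ⟨M, mem_filter.2 ⟨mem_powerset.2 hMD, subset_rfl, hM⟩⟩
  obtain ⟨hID, hMI, hIind⟩ := by simpa only [mem_filter, mem_powerset] using hI
  exact ⟨I, hMI, hID, hIind, fun s hMs hsD hs =>
    hmax s (mem_filter.2 ⟨mem_powerset.2 hsD, hMs, hs⟩)⟩

theorem IsMaxIndepSetBetween.exists_adj {M D I : Finset V} (hI : IsMaxIndepSetBetween G M D I)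
    {v : V} (hvD : v ∈ D) (hvI : v ∉ I) : ∃ u ∈ I, G.Adj u v := by
  classical
  obtain ⟨hMI, hID, hIind, hmax⟩ := hI
  by_contra! h
  have := hmax _ (hMI.trans (subset_insert v I)) (insert_subset hvD hID)
    (hIind.insert fun u hu hvu => h u hu hvu.symm)
  rw [card_insert_of_notMem hvI] at this
  omega

variable [G.LocallyFinite]

theorem card_le_sum_card_neighborFinset_inter [DecidableEq V] {B J : Finset V}
    (hJ : ∀ u ∈ J, ∃ d ∈ B, G.Adj d u) : #J ≤ ∑ d ∈ B, #(G.neighborFinset d ∩ J) :=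
  calc #J ≤ #(B.biUnion fun d => G.neighborFinset d ∩ J) := card_le_card fun u hu => by
        obtain ⟨d, hd, hdu⟩ := hJ u hu
        exact mem_biUnion.2 ⟨d, hd, mem_inter.2 ⟨(G.mem_neighborFinset d u).2 hdu, hu⟩⟩
    _ ≤ ∑ d ∈ B, #(G.neighborFinset d ∩ J) := card_biUnion_le

/-- The vertices of `B` with no neighbour in `B` form an independent set; each of the others
contributes at least one to the sum. -/
theorem card_le_add_sum_card_neighborFinset_inter [DecidableEq V] {B : Finset V} {k : ℕ}
    (hk : ∀ s ⊆ B, IsIndepSet G s → #s ≤ k) :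
    #B ≤ k + ∑ d ∈ B, #(G.neighborFinset d ∩ B) := by
  set p : V → Prop := fun d => (G.neighborFinset d ∩ B).Nonempty
  have hisolated : #(B.filter fun d => ¬ p d) ≤ k := by
    refine hk _ (filter_subset _ _) fun u hu v hv huv => (mem_filter.1 hu).2 ?_
    exact ⟨v, mem_inter.2 ⟨(G.mem_neighborFinset u v).2 huv, (mem_filter.1 hv).1⟩⟩
  have hrest : #(B.filter p) ≤ ∑ d ∈ B, #(G.neighborFinset d ∩ B) := by
    rw [card_filter]
    refine sum_le_sum fun d _ => ?_
    split_ifs with hd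
    · exact card_pos.2 hd
    · exact Nat.zero_le _
  have := card_filter_add_card_filter_not (s := B) p
  omega

theorem card_neighborFinset_inter_add_card_lt_degree [DecidableEq V] {J B : Finset V}
    (hJB : Disjoint J B) {d m : V} (hdm : G.Adj d m) (hm : m ∉ J ∪ B) :
    #(G.neighborFinset d ∩ J) + #(G.neighborFinset d ∩ B) < G.degree d := by
  rw [← card_union_of_disjoint (hJB.mono inter_subset_right inter_subset_right),
    ← inter_union_distrib_left, ← G.card_neighborFinset_eq_degree]
  refine card_lt_card ((ssubset_iff_of_subset inter_subset_left).2 ⟨m, ?_, ?_⟩)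
  · exact (G.mem_neighborFinset d m).2 hdm
  · exact fun h => hm (mem_inter.1 h).2

theorem two_mul_card_le_of_degree_le_three [DecidableEq V] {B J : Finset V} {k : ℕ}
    (hdeg : ∀ d ∈ B, G.degree d ≤ 3) (hJB : Disjoint J B)
    (hB : ∀ d ∈ B, ∃ m ∉ J ∪ B, G.Adj d m) (hJ : ∀ u ∈ J, ∃ d ∈ B, G.Adj d u)
    (hk : ∀ s ⊆ B, IsIndepSet G s → #s ≤ k) : 2 * #J ≤ 3 * #B + k := by
  have hcover := card_le_sum_card_neighborFinset_inter hJ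
  have hindep := card_le_add_sum_card_neighborFinset_inter hk
  have hlocal : ∑ d ∈ B, (#(G.neighborFinset d ∩ J) + #(G.neighborFinset d ∩ B))
      ≤ ∑ _d ∈ B, 2 := sum_le_sum fun d hd => by
    obtain ⟨m, hm, hdm⟩ := hB d hd
    have := card_neighborFinset_inter_add_card_lt_degree hJB hdm hm
    have := hdeg d hd
    omega
  rw [sum_add_distrib, sum_const, smul_eq_mul] at hlocal
  omega

end

theorem exists_isDomSet_card_eq_domNum {V : Type*} [Fintype V] (G : SimpleGraph V) :
    ∃ D, IsDomSet G D ∧ #D = domNum G :=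
  Nat.sInf_mem (s := {n | ∃ D : Finset V, IsDomSet G D ∧ D.card = n})
    ⟨_, univ, fun v hv => absurd (mem_univ v) hv, rfl⟩

theorem indDomNum_le_card {V : Type*} [Fintype V] {G : SimpleGraph V} {I : Finset V}
    (hdom : IsDomSet G I) (hind : IsIndepSet G I) : indDomNum G ≤ #I :=
  Nat.sInf_le ⟨I, hdom, hind, rfl⟩

theorem stmt19 {V : Type*} [Fintype V] (G : SimpleGraph V) [DecidableRel G.Adj]
    (hcubic : G.IsRegularOfDegree 3) :
    2 * indDomNum G ≤ 3 * domNum G := by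
  classical
  obtain ⟨D, hD, hDcard⟩ := exists_isDomSet_card_eq_domNum G
  obtain ⟨M, hM⟩ := exists_isMaxIndepSetBetween G (empty_subset D) (by simp [IsIndepSet])
  have hB : ∀ d ∈ D \ M, ∃ m ∈ M, G.Adj m d := fun d hd =>
    hM.exists_adj (mem_sdiff.1 hd).1 (mem_sdiff.1 hd).2
  obtain ⟨-, hMD, hMind, hMmax⟩ := hM
  obtain ⟨I, hI⟩ := exists_isMaxIndepSetBetween G (subset_univ M) hMind
  have hIdom : IsDomSet G I := fun v hv => hI.exists_adj (mem_univ v) hv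
  obtain ⟨hMI, -, hIind, -⟩ := hI
  have hJD : Disjoint (I \ M) D := disjoint_left.2 fun u hu huD => by
    obtain ⟨m, hm, hmu⟩ := hB u (mem_sdiff.2 ⟨huD, (mem_sdiff.1 hu).2⟩)
    exact hIind.notMem_of_adj (hMI hm) hmu (mem_sdiff.1 hu).1
  have hBout : ∀ d ∈ D \ M, ∃ m ∉ (I \ M) ∪ (D \ M), G.Adj d m := fun d hd => by
    obtain ⟨m, hm, hmd⟩ := hB d hd
    exact ⟨m, fun h => by rcases mem_union.1 h with h | h <;> exact (mem_sdiff.1 h).2 hm,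
      hmd.symm⟩
  have hJ : ∀ u ∈ I \ M, ∃ d ∈ D \ M, G.Adj d u := fun u hu => by
    obtain ⟨d, hdD, hdu⟩ := hD u (disjoint_left.1 hJD hu)
    have hdM : d ∉ M := fun hdM => hIind.notMem_of_adj (hMI hdM) hdu (mem_sdiff.1 hu).1
    exact ⟨d, mem_sdiff.2 ⟨hdD, hdM⟩, hdu⟩
  have hcount := two_mul_card_le_of_degree_le_three (k := #M) (fun d _ => (hcubic d).le)
    (hJD.mono_right sdiff_subset) hBout hJ
    (fun s hs hsind => hMmax s (empty_subset s) (hs.trans sdiff_subset) hsind)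
  have hI := indDomNum_le_card hIdom hIind
  rw [← card_sdiff_add_card_eq_card hMI] at hI
  rw [← hDcard, ← card_sdiff_add_card_eq_card hMD]
  omega
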